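/- Let G be a game of type B1 with parameters (n1, n2, k1, k2) where 1 ≤ k1 < n1 and k2 − k1 = n2 − 1 ≥ 2, let g ∈ P2 be a player of level 2 of G, and let n ≥ 2 be an integer, with A_n defined on a player set disjoint from that of G. Then the composition G∘_g A_n is not weighted. -/
import Mathlib


open scoped Classical

/-- A simple game: a finite nonempty set of players together with a
nonempty, superset-closed collection of winning coalitions, all of which
are subsets of the player set. -/
structure SimpleGame (α : Type) where
  players : Finset α
  players_nonempty : players.Nonempty
  winning : Finset α → Prop
  winning_subset : ∀ X, winning X → X ⊆ players
  winning_nonempty : ∃ X, winning X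
  winning_mono : ∀ ⦃X Y : Finset α⦄, winning X → X ⊆ Y → Y ⊆ players → winning Y

namespace SimpleGame

variable {α : Type}

/-- A minimal winning coalition: winning, and all proper subsets are losing. -/
def MinWinning (G : SimpleGame α) (X : Finset α) : Prop :=
  G.winning X ∧ ∀ Y ⊂ X, ¬ G.winning Y

/-- A dummy: a player belonging to no minimal winning coalition. -/
def IsDummy (G : SimpleGame α) (p : α) : Prop :=
  ∀ X, G.MinWinning X → p ∉ X

/-- A passer: a player winning on its own. -/
def IsPasser (G : SimpleGame α) (p : α) : Prop := G.winning {p}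

/-- A vetoer: a player belonging to every winning coalition. -/
def IsVetoer (G : SimpleGame α) (p : α) : Prop := ∀ X, G.winning X → p ∈ X

/-- Isbell's desirability relation: `i ⪰ j`. -/
def Geq (G : SimpleGame α) (i j : α) : Prop :=
  ∀ X ⊆ G.players, i ∉ X → j ∉ X → G.winning (insert j X) → G.winning (insert i X)

/-- Strict desirability: `i ≻ j`. -/
def Gt (G : SimpleGame α) (i j : α) : Prop := G.Geq i j ∧ ¬ G.Geq j i

/-- A complete game: the desirability relation is total on players. -/
def Complete (G : SimpleGame α) : Prop :=
  ∀ i ∈ G.players, ∀ j ∈ G.players, G.Geq i j ∨ G.Geq j i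

/-- A weighted game: there are nonnegative real weights and a real quota such
that a coalition is winning iff its total weight meets the quota. -/
def Weighted (G : SimpleGame α) : Prop :=
  ∃ (w : α → ℝ) (q : ℝ), (∀ i, 0 ≤ w i) ∧
    ∀ X ⊆ G.players, (G.winning X ↔ q ≤ ∑ i ∈ X, w i)

/-- `IsComposition C G H g` says that `C` is the composition `G ∘_g H`:
its player set is `(P_G \ {g}) ∪ P_H` and a coalition `X` of `C` is winning
iff `X ∩ P_G` is winning in `G`, or `(X ∩ P_G) ∪ {g}` is winning in `G` and
`X ∩ P_H` is winning in `H`. -/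
def IsComposition (C G H : SimpleGame α) (g : α) : Prop :=
  C.players = (G.players \ {g}) ∪ H.players ∧
  ∀ X ⊆ C.players,
    (C.winning X ↔ (G.winning (X ∩ G.players) ∨
      (G.winning (insert g (X ∩ G.players)) ∧ H.winning (X ∩ H.players))))

/-- `G` is the `k`-out-of-`n` game `H_{n,k}`: it has `n` players and a
coalition is winning iff it has at least `k` players. -/
def IsKOutOfN (G : SimpleGame α) (n k : ℕ) : Prop :=
  G.players.card = n ∧ ∀ X ⊆ G.players, (G.winning X ↔ k ≤ X.card)

/-- Isomorphism of simple games: a bijection between the player sets mapping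
winning coalitions exactly onto winning coalitions. -/
def Isomorphic {β : Type} (G : SimpleGame α) (G' : SimpleGame β) : Prop :=
  ∃ σ : α → β, Set.InjOn σ ↑G.players ∧ G.players.image σ = G'.players ∧
    ∀ X ⊆ G.players, (G.winning X ↔ G'.winning (X.image σ))

/-- A decomposable game: one isomorphic to a composition `H ∘_h K` where both
`H` and `K` have at least two players. -/
def Decomposable (G : SimpleGame α) : Prop :=
  ∃ (β : Type) (H K C : SimpleGame β) (h : β),
    Disjoint H.players K.players ∧ h ∈ H.players ∧
    2 ≤ H.players.card ∧ 2 ≤ K.players.card ∧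
    IsComposition C H K h ∧ Isomorphic G C

/-- `(X1, X2; Y1, Y2)` is a trading transform: every player belongs to exactly
as many of `X1, X2` (with multiplicity) as of `Y1, Y2`. -/
def IsTradingTransform2 (X1 X2 Y1 Y2 : Finset α) : Prop :=
  ∀ a : α, ((if a ∈ X1 then 1 else 0) + (if a ∈ X2 then 1 else 0) : ℕ)
    = (if a ∈ Y1 then 1 else 0) + (if a ∈ Y2 then 1 else 0)

end SimpleGame

open SimpleGame
/-- the composition of a game of type B1 (with `1 ≤ k1 < n1` and
`k2 - k1 = n2 - 1 ≥ 2`, encoded by `k2 + 1 = k1 + n2` and `k1 + 2 ≤ k2`) over a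
player `g` of level 2 with the anti-unanimity game `A_n`, `n ≥ 2`, is not
weighted. -/
theorem statement19 {α : Type} (n1 n2 k1 k2 n : ℕ)
    (hk1 : 1 ≤ k1) (hk1n1 : k1 < n1)
    (hk2 : k2 + 1 = k1 + n2) (hgap : k1 + 2 ≤ k2)
    (G : SimpleGame α) (P1 P2 : Finset α)
    (hP : Disjoint P1 P2) (hplayers : G.players = P1 ∪ P2)
    (hP1 : P1.card = n1) (hP2 : P2.card = n2)
    (hwin : ∀ X ⊆ G.players,
      (G.winning X ↔ (k1 ≤ (X ∩ P1).card ∧ k2 ≤ X.card)))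
    (g : α) (hg : g ∈ P2)
    (A C : SimpleGame α) (hn : 2 ≤ n)
    (hA : SimpleGame.IsKOutOfN A n 1)
    (hdisj : Disjoint G.players A.players)
    (hC : SimpleGame.IsComposition C G A g) :
    ¬ C.Weighted := by

  -- basic numeric facts
  have hn2 : 3 ≤ n2 := by omega
  -- basic set facts
  have hP1G : P1 ⊆ G.players := by rw [hplayers]; exact Finset.subset_union_left
  have hP2G : P2 ⊆ G.players := by rw [hplayers]; exact Finset.subset_union_right
  have hP1P2 : ∀ x ∈ P1, x ∉ P2 := fun x hx => Finset.disjoint_left.1 hP hx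
  have hAG : ∀ x ∈ A.players, x ∉ G.players := fun x hx hxg =>
    Finset.disjoint_left.1 hdisj hxg hx
  have hgP2 : g ∈ P2 := hg
  have hgP1 : g ∉ P1 := fun h => hP1P2 g h hgP2
  -- choose players
  obtain ⟨S', hS'P1, hS'card⟩ := Finset.exists_subset_card_eq
    (show k1 + 1 ≤ P1.card by rw [hP1]; omega)
  obtain ⟨p1, hp1S'⟩ := Finset.card_pos.mp (show 0 < S'.card by omega)
  obtain ⟨p, hpE⟩ := Finset.card_pos.mp
    (show 0 < (S'.erase p1).card by rw [Finset.card_erase_of_mem hp1S']; omega)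
  have hpne : p ≠ p1 := (Finset.mem_erase.1 hpE).1
  have hpS' : p ∈ S' := (Finset.mem_erase.1 hpE).2
  set S0 : Finset α := (S'.erase p1).erase p with hS0def
  have hS0card : S0.card = k1 - 1 := by
    rw [hS0def, Finset.card_erase_of_mem hpE, Finset.card_erase_of_mem hp1S', hS'card]
    omega
  have hS0P1 : S0 ⊆ P1 := fun x hx =>
    hS'P1 (Finset.mem_of_mem_erase (Finset.mem_of_mem_erase hx))
  have hp1P1 : p1 ∈ P1 := hS'P1 hp1S'
  have hpP1 : p ∈ P1 := hS'P1 hpS'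
  have hp1S0 : p1 ∉ S0 := fun h =>
    (Finset.mem_erase.1 (Finset.mem_of_mem_erase h)).1 rfl
  have hpS0 : p ∉ S0 := Finset.notMem_erase p _
  set T : Finset α := P2.erase g with hTdef
  have hTcard : T.card = n2 - 1 := by rw [hTdef, Finset.card_erase_of_mem hgP2, hP2]
  have hTP2 : T ⊆ P2 := Finset.erase_subset g P2
  obtain ⟨t1, ht1T⟩ := Finset.card_pos.mp (show 0 < T.card by omega)
  obtain ⟨t2, ht2E⟩ := Finset.card_pos.mp
    (show 0 < (T.erase t1).card by rw [Finset.card_erase_of_mem ht1T]; omega)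
  have ht2ne : t2 ≠ t1 := (Finset.mem_erase.1 ht2E).1
  have ht2T : t2 ∈ T := (Finset.mem_erase.1 ht2E).2
  obtain ⟨a, haA⟩ := Finset.card_pos.mp (show 0 < A.players.card by rw [hA.1]; omega)
  obtain ⟨b, hbE⟩ := Finset.card_pos.mp
    (show 0 < (A.players.erase a).card by rw [Finset.card_erase_of_mem haA, hA.1]; omega)
  have hbne : b ≠ a := (Finset.mem_erase.1 hbE).1
  have hbA : b ∈ A.players := (Finset.mem_erase.1 hbE).2
  set B1 : Finset α := T.erase t2 with hB1def
  set B2 : Finset α := T.erase t1 with hB2def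
  set B0 : Finset α := (T.erase t1).erase t2 with hB0def
  have hB1T : B1 ⊆ T := Finset.erase_subset _ _
  have hB2T : B2 ⊆ T := Finset.erase_subset _ _
  have hB0T : B0 ⊆ T := fun x hx => Finset.mem_of_mem_erase (Finset.mem_of_mem_erase hx)
  have hB1card : B1.card = n2 - 2 := by
    rw [hB1def, Finset.card_erase_of_mem ht2T, hTcard]
    omega
  have hB2card : B2.card = n2 - 2 := by
    rw [hB2def, Finset.card_erase_of_mem ht1T, hTcard]
    omega
  have ht2B2 : t2 ∈ B2 := Finset.mem_erase.2 ⟨ht2ne, ht2T⟩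
  have hB0card : B0.card = n2 - 3 := by
    rw [hB0def, Finset.card_erase_of_mem ht2E, Finset.card_erase_of_mem ht1T, hTcard]
    omega
  -- generic helpers about pieces
  have hTnotg : g ∉ T := Finset.notMem_erase g P2
  have hTG : T ⊆ G.players := hTP2.trans hP2G
  have hdisjP1T : ∀ x ∈ P1, x ∉ T := fun x hx hxT => hP1P2 x hx (hTP2 hxT)
  have hnotA : ∀ x ∈ P1 ∪ P2, x ∉ A.players := fun x hx hxA =>
    hAG x hxA (by rw [hplayers]; exact hx)
  have haG : a ∉ G.players := fun h => hAG a haA h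
  have hbG : b ∉ G.players := fun h => hAG b hbA h
  -- the four coalitions
  set X1 : Finset α := insert a (insert p1 (S0 ∪ B1)) with hX1def
  set X2 : Finset α := insert b (insert p (S0 ∪ B2)) with hX2def
  set Y1 : Finset α := insert p1 (insert p (S0 ∪ B0)) with hY1def
  set Y2 : Finset α := insert a (insert b (S0 ∪ T)) with hY2def
  -- subset of G.players for the G-parts
  have hZ1G : insert p1 (S0 ∪ B1) ⊆ G.players :=
    Finset.insert_subset (hP1G hp1P1)
      (Finset.union_subset (hS0P1.trans hP1G) (hB1T.trans hTG))
  have hZ2G : insert p (S0 ∪ B2) ⊆ G.players :=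
    Finset.insert_subset (hP1G hpP1)
      (Finset.union_subset (hS0P1.trans hP1G) (hB2T.trans hTG))
  have hY1G : Y1 ⊆ G.players := by
    rw [hY1def]
    exact Finset.insert_subset (hP1G hp1P1) (Finset.insert_subset (hP1G hpP1)
      (Finset.union_subset (hS0P1.trans hP1G) (hB0T.trans hTG)))
  have hZ4G : S0 ∪ T ⊆ G.players := Finset.union_subset (hS0P1.trans hP1G) hTG
  -- subsets of C.players
  have hCpl := hC.1
  have hGC : ∀ x ∈ G.players, x ≠ g → x ∈ C.players := by
    intro x hx hxg
    rw [hCpl]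
    exact Finset.mem_union_left _ (Finset.mem_sdiff.2 ⟨hx, by simp [hxg]⟩)
  have hAC : ∀ x ∈ A.players, x ∈ C.players := by
    intro x hx; rw [hCpl]; exact Finset.mem_union_right _ hx
  have hP1ng : ∀ x ∈ P1, x ≠ g := fun x hx h => hgP1 (h ▸ hx)
  have hTng : ∀ x ∈ T, x ≠ g := fun x hx h => hTnotg (h ▸ hx)
  have hZ1C : ∀ x ∈ insert p1 (S0 ∪ B1), x ∈ C.players := by
    intro x hx
    rcases Finset.mem_insert.1 hx with h | h
    · exact hGC x (hZ1G hx) (h ▸ hP1ng p1 hp1P1)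
    · rcases Finset.mem_union.1 h with h' | h'
      · exact hGC x (hZ1G hx) (hP1ng x (hS0P1 h'))
      · exact hGC x (hZ1G hx) (hTng x (hB1T h'))
  have hZ2C : ∀ x ∈ insert p (S0 ∪ B2), x ∈ C.players := by
    intro x hx
    rcases Finset.mem_insert.1 hx with h | h
    · exact hGC x (hZ2G hx) (h ▸ hP1ng p hpP1)
    · rcases Finset.mem_union.1 h with h' | h'
      · exact hGC x (hZ2G hx) (hP1ng x (hS0P1 h'))
      · exact hGC x (hZ2G hx) (hTng x (hB2T h'))
  have hX1C : X1 ⊆ C.players := by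
    rw [hX1def]
    exact Finset.insert_subset (hAC a haA) hZ1C
  have hX2C : X2 ⊆ C.players := by
    rw [hX2def]
    exact Finset.insert_subset (hAC b hbA) hZ2C
  have hY1C : Y1 ⊆ C.players := by
    intro x hx
    rw [hY1def] at hx
    rcases Finset.mem_insert.1 hx with h | h
    · exact hGC x (hY1G (hY1def ▸ hx)) (h ▸ hP1ng p1 hp1P1)
    · rcases Finset.mem_insert.1 h with h' | h'
      · exact hGC x (hY1G (hY1def ▸ hx)) (h' ▸ hP1ng p hpP1)
      · rcases Finset.mem_union.1 h' with h'' | h''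
        · exact hGC x (hY1G (hY1def ▸ hx)) (hP1ng x (hS0P1 h''))
        · exact hGC x (hY1G (hY1def ▸ hx)) (hTng x (hB0T h''))
  have hY2C : Y2 ⊆ C.players := by
    intro x hx
    rw [hY2def] at hx
    rcases Finset.mem_insert.1 hx with h | h
    · exact h ▸ hAC a haA
    · rcases Finset.mem_insert.1 h with h' | h'
      · exact h' ▸ hAC b hbA
      · rcases Finset.mem_union.1 h' with h'' | h''
        · exact hGC x (hP1G (hS0P1 h'')) (hP1ng x (hS0P1 h''))
        · exact hGC x (hTG h'') (hTng x h'')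
  -- intersections with G.players
  have hdGA : ∀ (s : Finset α), s ⊆ G.players → s ∩ A.players = ∅ := by
    intro s hs
    exact Finset.disjoint_iff_inter_eq_empty.1
      (Finset.disjoint_of_subset_left hs hdisj)
  have hX1iG : X1 ∩ G.players = insert p1 (S0 ∪ B1) := by
    rw [hX1def, Finset.insert_inter_of_notMem haG, Finset.inter_eq_left.2 hZ1G]
  have hX2iG : X2 ∩ G.players = insert p (S0 ∪ B2) := by
    rw [hX2def, Finset.insert_inter_of_notMem hbG, Finset.inter_eq_left.2 hZ2G]
  have hY1iG : Y1 ∩ G.players = Y1 := Finset.inter_eq_left.2 hY1G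
  have hY2iG : Y2 ∩ G.players = S0 ∪ T := by
    rw [hY2def, Finset.insert_inter_of_notMem haG, Finset.insert_inter_of_notMem hbG,
      Finset.inter_eq_left.2 hZ4G]
  -- intersections with A.players
  have hX1iA : X1 ∩ A.players = {a} := by
    rw [hX1def, Finset.insert_inter_of_mem haA, hdGA _ hZ1G]
    rfl
  have hX2iA : X2 ∩ A.players = {b} := by
    rw [hX2def, Finset.insert_inter_of_mem hbA, hdGA _ hZ2G]
    rfl
  have hY1iA : Y1 ∩ A.players = ∅ := hdGA _ hY1G
  -- intersections with P1 (for sets inside G.players)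
  have hS0iP1 : S0 ∩ P1 = S0 := Finset.inter_eq_left.2 hS0P1
  have hTiP1 : ∀ (s : Finset α), s ⊆ T → s ∩ P1 = ∅ := fun s hs =>
    Finset.disjoint_iff_inter_eq_empty.1
      (Finset.disjoint_left.2 fun x hx hxP1 => hdisjP1T x hxP1 (hs hx))
  -- winning A-coalitions
  have hAwin : ∀ x ∈ A.players, A.winning {x} := by
    intro x hx
    rw [(hA.2 {x} (Finset.singleton_subset_iff.2 hx))]
    simp
  have hAlose : ¬ A.winning (∅ : Finset α) := by
    rw [(hA.2 ∅ (Finset.empty_subset _))]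
    simp
  -- cardinalities
  have hdS0B1 : Disjoint S0 B1 :=
    Finset.disjoint_left.2 fun x hx hx' => hdisjP1T x (hS0P1 hx) (hB1T hx')
  have hdS0B2 : Disjoint S0 B2 :=
    Finset.disjoint_left.2 fun x hx hx' => hdisjP1T x (hS0P1 hx) (hB2T hx')
  have hdS0B0 : Disjoint S0 B0 :=
    Finset.disjoint_left.2 fun x hx hx' => hdisjP1T x (hS0P1 hx) (hB0T hx')
  have hdS0T : Disjoint S0 T :=
    Finset.disjoint_left.2 fun x hx hx' => hdisjP1T x (hS0P1 hx) hx'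
  have hp1nB1 : p1 ∉ S0 ∪ B1 := by
    simp only [Finset.mem_union, not_or]
    exact ⟨hp1S0, fun h => hdisjP1T p1 hp1P1 (hB1T h)⟩
  have hpnB2 : p ∉ S0 ∪ B2 := by
    simp only [Finset.mem_union, not_or]
    exact ⟨hpS0, fun h => hdisjP1T p hpP1 (hB2T h)⟩
  have hpnB0 : p ∉ S0 ∪ B0 := by
    simp only [Finset.mem_union, not_or]
    exact ⟨hpS0, fun h => hdisjP1T p hpP1 (hB0T h)⟩
  have hp1nI : p1 ∉ insert p (S0 ∪ B0) := by
    simp only [Finset.mem_insert, not_or, Finset.mem_union]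
    exact ⟨fun h => hpne h.symm, hp1S0, fun h => hdisjP1T p1 hp1P1 (hB0T h)⟩
  have hanZ1 : a ∉ insert p1 (S0 ∪ B1) := fun h => haG (hZ1G h)
  have hbnZ2 : b ∉ insert p (S0 ∪ B2) := fun h => hbG (hZ2G h)
  have hbnS0T : b ∉ S0 ∪ T := fun h => hbG (hZ4G h)
  have hanI : a ∉ insert b (S0 ∪ T) := by
    simp only [Finset.mem_insert, not_or]
    exact ⟨fun h => hbne h.symm, fun h => haG (hZ4G h)⟩
  have hgnZ1 : g ∉ insert p1 (S0 ∪ B1) := by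
    simp only [Finset.mem_insert, not_or, Finset.mem_union]
    exact ⟨fun h => hgP1 (h ▸ hp1P1), fun h => hgP1 (hS0P1 h),
      fun h => hTnotg (hB1T h)⟩
  have hgnZ2 : g ∉ insert p (S0 ∪ B2) := by
    simp only [Finset.mem_insert, not_or, Finset.mem_union]
    exact ⟨fun h => hgP1 (h ▸ hpP1), fun h => hgP1 (hS0P1 h),
      fun h => hTnotg (hB2T h)⟩
  have hgnS0T : g ∉ S0 ∪ T := by
    simp only [Finset.mem_union, not_or]
    exact ⟨fun h => hgP1 (hS0P1 h), hTnotg⟩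
  -- X1 is winning in C
  have hX1win : C.winning X1 := by
    rw [(hC.2 X1 hX1C)]
    right
    constructor
    · rw [hX1iG]
      have hsub : insert g (insert p1 (S0 ∪ B1)) ⊆ G.players :=
        Finset.insert_subset (hP2G hgP2) hZ1G
      rw [hwin _ hsub]
      constructor
      · have : insert g (insert p1 (S0 ∪ B1)) ∩ P1 = insert p1 S0 := by
          rw [Finset.insert_inter_of_notMem hgP1, Finset.insert_inter_of_mem hp1P1,
            Finset.union_inter_distrib_right, hS0iP1, hTiP1 B1 hB1T, Finset.union_empty]
        rw [this, Finset.card_insert_of_notMem hp1S0, hS0card]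
        omega
      · rw [Finset.card_insert_of_notMem hgnZ1,
          Finset.card_insert_of_notMem hp1nB1,
          Finset.card_union_of_disjoint hdS0B1, hS0card, hB1card]
        omega
    · rw [hX1iA]
      exact hAwin a haA
  -- X2 is winning in C
  have hX2win : C.winning X2 := by
    rw [(hC.2 X2 hX2C)]
    right
    constructor
    · rw [hX2iG]
      have hsub : insert g (insert p (S0 ∪ B2)) ⊆ G.players :=
        Finset.insert_subset (hP2G hgP2) hZ2G
      rw [hwin _ hsub]
      constructor
      · have : insert g (insert p (S0 ∪ B2)) ∩ P1 = insert p S0 := by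
          rw [Finset.insert_inter_of_notMem hgP1, Finset.insert_inter_of_mem hpP1,
            Finset.union_inter_distrib_right, hS0iP1, hTiP1 B2 hB2T, Finset.union_empty]
        rw [this, Finset.card_insert_of_notMem hpS0, hS0card]
        omega
      · rw [Finset.card_insert_of_notMem hgnZ2,
          Finset.card_insert_of_notMem hpnB2,
          Finset.card_union_of_disjoint hdS0B2, hS0card, hB2card]
        omega
    · rw [hX2iA]
      exact hAwin b hbA
  -- Y1 is losing in C
  have hY1card : Y1.card = k2 - 1 := by
    rw [hY1def, Finset.card_insert_of_notMem hp1nI,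
      Finset.card_insert_of_notMem hpnB0,
      Finset.card_union_of_disjoint hdS0B0, hS0card, hB0card]
    omega
  have hY1lose : ¬ C.winning Y1 := by
    rw [(hC.2 Y1 hY1C)]
    rintro (h | ⟨-, h⟩)
    · rw [hY1iG, hwin _ hY1G] at h
      omega
    · rw [hY1iA] at h
      exact hAlose h
  -- Y2 is losing in C
  have hY2lose : ¬ C.winning Y2 := by
    rw [(hC.2 Y2 hY2C)]
    have hiP1 : (S0 ∪ T) ∩ P1 = S0 := by
      rw [Finset.union_inter_distrib_right, hS0iP1, hTiP1 T (le_refl T),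
        Finset.union_empty]
    rintro (h | ⟨h, -⟩)
    · rw [hY2iG, hwin _ hZ4G, hiP1, hS0card] at h
      omega
    · rw [hY2iG] at h
      have hsub : insert g (S0 ∪ T) ⊆ G.players :=
        Finset.insert_subset (hP2G hgP2) hZ4G
      rw [hwin _ hsub, Finset.insert_inter_of_notMem hgP1, hiP1, hS0card] at h
      omega
  -- now the weights contradiction
  rintro ⟨w, q, hwpos, hq⟩
  have h1 : q ≤ ∑ i ∈ X1, w i := (hq X1 hX1C).1 hX1win
  have h2 : q ≤ ∑ i ∈ X2, w i := (hq X2 hX2C).1 hX2win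
  have h3 : ∑ i ∈ Y1, w i < q := by
    by_contra h
    exact hY1lose ((hq Y1 hY1C).2 (le_of_not_gt h))
  have h4 : ∑ i ∈ Y2, w i < q := by
    by_contra h
    exact hY2lose ((hq Y2 hY2C).2 (le_of_not_gt h))
  -- sums
  have e1 : ∑ i ∈ X1, w i = w a + (w p1 + (∑ i ∈ S0, w i + ∑ i ∈ B1, w i)) := by
    rw [hX1def, Finset.sum_insert hanZ1, Finset.sum_insert hp1nB1,
      Finset.sum_union hdS0B1]
  have e2 : ∑ i ∈ X2, w i = w b + (w p + (∑ i ∈ S0, w i + ∑ i ∈ B2, w i)) := by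
    rw [hX2def, Finset.sum_insert hbnZ2, Finset.sum_insert hpnB2,
      Finset.sum_union hdS0B2]
  have e3 : ∑ i ∈ Y1, w i = w p1 + (w p + (∑ i ∈ S0, w i + ∑ i ∈ B0, w i)) := by
    rw [hY1def, Finset.sum_insert hp1nI, Finset.sum_insert hpnB0,
      Finset.sum_union hdS0B0]
  have e4 : ∑ i ∈ Y2, w i = w a + (w b + (∑ i ∈ S0, w i + ∑ i ∈ T, w i)) := by
    rw [hY2def, Finset.sum_insert hanI, Finset.sum_insert hbnS0T,
      Finset.sum_union hdS0T]
  have eB1 : ∑ i ∈ B1, w i + w t2 = ∑ i ∈ T, w i := Finset.sum_erase_add T w ht2T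
  have eB2 : ∑ i ∈ B2, w i + w t1 = ∑ i ∈ T, w i := Finset.sum_erase_add T w ht1T
  have eB0 : ∑ i ∈ B0, w i + w t2 = ∑ i ∈ B2, w i :=
    Finset.sum_erase_add (T.erase t1) w ht2E
  linarith
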